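/- arXiv:0910.2676 — 6 statements merged into one kernel-verified Lean document; each statement's English description precedes it below -/
import Mathlib

section
/- Let p be an odd prime, q = p^r, and n a positive integer with p ∤ n and p ∤ (n−1). Then there exists an integer i with 1 ≤ i ≤ q−1 and gcd(i,p) = 1 such that ⌊ni/q⌋ and n−1 are relatively prime. -/
/-!
Write `m = n - 1`, which is prime to `q = p ^ r`. Choose `0 < i < q` with `m i ≡ -1 (mod q)`, say
`m i + 1 = q k`. Then `n i = q k + (i - 1)` with `i - 1 < q`, so `⌊n i / q⌋ = k`, and the Bézout
relation `q k - m i = 1` shows both that `k` is prime to `m` and that `i` is prime to `q`.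
-/

namespace Nat

theorem coprime_of_mul_add_one_eq_mul {a b c d : ℕ} (h : a * b + 1 = c * d) : Coprime a d := by
  rw [← Nat.isCoprime_iff_coprime]
  have hℤ : ((a * b + 1 : ℕ) : ℤ) = (c * d : ℕ) := congrArg _ h
  push_cast at hℤ
  exact ⟨-b, c, by linarith⟩

theorem exists_mul_add_one_eq_mul {m q : ℕ} (hq : 1 < q) (hm : Coprime m q) :
    ∃ i k, 0 < i ∧ i < q ∧ m * i + 1 = q * k := by
  have : Fact (1 < q) := ⟨hq⟩
  set u : (ZMod q)ˣ := -(ZMod.unitOfCoprime m hm)⁻¹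
  obtain ⟨k, hk⟩ : q ∣ m * (u : ZMod q).val + 1 := by
    rw [← ZMod.natCast_eq_zero_iff]
    simp only [u, Nat.cast_add, Nat.cast_mul, ZMod.natCast_val, ZMod.cast_id', id, Units.val_neg,
      Nat.cast_one, mul_neg]
    rw [← ZMod.coe_unitOfCoprime m hm, Units.mul_inv, neg_add_cancel]
  exact ⟨(u : ZMod q).val, k, Nat.pos_of_ne_zero ((ZMod.val_ne_zero _).mpr u.ne_zero),
    ZMod.val_lt _, hk⟩

theorem succ_mul_div_eq_of_mul_add_one_eq_mul {m i q k : ℕ} (hi : 0 < i) (hiq : i < q)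
    (h : m * i + 1 = q * k) : (m + 1) * i / q = k := by
  have hsplit : (m + 1) * i = q * k + (i - 1) := by
    rw [add_one_mul]
    generalize m * i = a at h ⊢
    omega
  rw [hsplit, Nat.mul_add_div (by omega), Nat.div_eq_of_lt (by omega), add_zero]

end Nat

theorem stmt3_general (p r n : ℕ) (hp : p.Prime) (hr : 1 ≤ r)
    (hpn1 : ¬ p ∣ (n - 1)) :
    ∃ i : ℕ, 1 ≤ i ∧ i ≤ p ^ r - 1 ∧ Nat.gcd i p = 1 ∧
      Nat.gcd (n * i / p ^ r) (n - 1) = 1 := by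
  obtain ⟨m, rfl⟩ : ∃ m, n = m + 1 :=
    Nat.exists_eq_add_one.mpr (Nat.pos_of_ne_zero (by rintro rfl; exact hpn1 (dvd_zero p)))
  rw [Nat.add_sub_cancel] at hpn1 ⊢
  have hq : 1 < p ^ r := Nat.one_lt_pow (by omega) hp.one_lt
  have hmq : Nat.Coprime m (p ^ r) := (hp.coprime_iff_not_dvd.mpr hpn1).symm.pow_right r
  obtain ⟨i, k, hi, hiq, hk⟩ := Nat.exists_mul_add_one_eq_mul hq hmq
  have hi_coprime : Nat.Coprime i (p ^ r) :=
    Nat.coprime_of_mul_add_one_eq_mul (by rw [mul_comm i, mul_comm k, hk] : i * m + 1 = k * p ^ r)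
  refine ⟨i, hi, by omega, hi_coprime.coprime_dvd_right (dvd_pow_self p (by omega)), ?_⟩
  rw [Nat.succ_mul_div_eq_of_mul_add_one_eq_mul hi hiq hk]
  exact (Nat.coprime_of_mul_add_one_eq_mul hk).symm

/-- `p` an odd prime, `q = p^r`, `n` positive with `p ∤ n` and
`p ∤ (n-1)`. Then there is `i` with `1 ≤ i ≤ q-1`, `gcd(i,p) = 1` and
`gcd(⌊n i/q⌋, n-1) = 1`. -/
theorem stmt3 (p r n : ℕ) (hp : p.Prime) (hodd : Odd p) (hr : 1 ≤ r)
    (hn : 0 < n) (hpn : ¬ p ∣ n) (hpn1 : ¬ p ∣ (n - 1)) :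
    ∃ i : ℕ, 1 ≤ i ∧ i ≤ p ^ r - 1 ∧ Nat.gcd i p = 1 ∧
      Nat.gcd (n * i / p ^ r) (n - 1) = 1 :=
  stmt3_general p r n hp hr hpn1
end

section
/- Let p be a prime, q = p^r, and n a positive integer with p ∤ n. Write n = kq + c with 2 ≤ c ≤ q−1 and set d = c−1. If d is not divisible by p, choose i with 1 ≤ i ≤ q−1 and i·d ≡ 1 (mod q). Then i·d − q·⌊ci/q⌋ = 1, gcd(i,p) = 1, and gcd(⌊ni/q⌋, n−1) = 1. -/
/-- `p` prime, `q = p^r`, `p ∤ n`, `n = kq + c` with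
`k = ⌊n/q⌋`, `2 ≤ c ≤ q-1`, `d = c-1` not divisible by `p`, and `i` with
`1 ≤ i ≤ q-1` and `i·d ≡ 1 (mod q)`. Then `i·d − q·⌊ci/q⌋ = 1`,
`gcd(i,p) = 1`, and `gcd(⌊n i/q⌋, n-1) = 1`. -/
theorem stmt4 (p r n i : ℕ) (hp : p.Prime) (hr : 1 ≤ r) (hn : 0 < n)
    (hpn : ¬ p ∣ n)
    (c : ℕ) (hc : c = n - (n / p ^ r) * p ^ r)
    (hc2 : 2 ≤ c) (hcq : c ≤ p ^ r - 1)
    (d : ℕ) (hd : d = c - 1) (hpd : ¬ p ∣ d)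
    (hi1 : 1 ≤ i) (hi2 : i ≤ p ^ r - 1) (himod : i * d ≡ 1 [MOD p ^ r]) :
    ((i * d : ℕ) : ℤ) - (p ^ r : ℤ) * ((c * i / p ^ r : ℕ) : ℤ) = 1 ∧
      Nat.gcd i p = 1 ∧ Nat.gcd (n * i / p ^ r) (n - 1) = 1 := by
  set q := p ^ r with hq
  have hp2 : 2 ≤ p := hp.two_le
  have hq2 : 2 ≤ q := by
    calc 2 ≤ p := hp2
    _ = p ^ 1 := (pow_one p).symm
    _ ≤ q := Nat.pow_le_pow_right (by omega) hr
  have hq0 : 0 < q := by omega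
  -- i*d = q*m + 1
  have hmod : (i * d) % q = 1 := by
    have h := himod
    unfold Nat.ModEq at h
    have h1q : (1 : ℕ) % q = 1 := Nat.mod_eq_of_lt (by omega)
    rwa [h1q] at h
  obtain ⟨m, hidm⟩ : ∃ m, i * d = q * m + 1 :=
    ⟨i * d / q, by have := Nat.div_add_mod (i * d) q; omega⟩
  -- i + 1 < q
  have hcd : c = d + 1 := by omega
  have hlt : i + 1 < q := by
    by_contra h
    have hi : i = q - 1 := by omega
    have h2 : q * d = q * m + 1 + d := by
      have h1 : (q - 1) * d = q * d - d := by
        rw [Nat.sub_mul, one_mul]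
      rw [hi] at hidm
      omega
    have h2' : (q : ℤ) * d = q * m + 1 + d := by exact_mod_cast h2
    have hdvd : (q : ℤ) ∣ (d : ℤ) + 1 :=
      ⟨(d : ℤ) - m, by linarith⟩
    have := Int.le_of_dvd (by positivity) hdvd
    have hq' : (q : ℤ) ≤ d + 1 := this
    have : q ≤ d + 1 := by exact_mod_cast hq'
    omega
  -- c*i/q = m
  have hci : c * i = q * m + (i + 1) := by
    have : c * i = d * i + i := by rw [hcd]; ring
    rw [this, mul_comm d i]; omega
  have hciq : c * i / q = m := by
    rw [hci, Nat.mul_add_div hq0, Nat.div_eq_of_lt hlt, add_zero]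
  refine ⟨?_, ?_, ?_⟩
  · rw [hciq]
    have h1 : ((i : ℤ)) * d = q * m + 1 := by exact_mod_cast hidm
    rw [hq] at h1
    push_cast at h1 ⊢
    linarith
  · have hpi : ¬ p ∣ i := by
      intro hdvd
      have h1 : p ∣ i * d := hdvd.mul_right d
      have h2 : p ∣ q * m := (dvd_pow_self p (by omega)).mul_right m
      have h3 : p ∣ 1 := by
        have := Nat.dvd_sub h1 h2
        rwa [hidm, Nat.add_sub_cancel_left] at this
      have := Nat.le_of_dvd one_pos h3
      omega
    have := (hp.coprime_iff_not_dvd).mpr hpi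
    rw [Nat.gcd_comm]
    exact this
  · set k := n / q with hk
    have hnk : n = k * q + c := by
      have h1 : k * q ≤ n := Nat.div_mul_le_self n q
      omega
    have hni : n * i = q * (k * i + m) + (i + 1) := by
      calc n * i = (k * q + c) * i := by rw [← hnk]
        _ = q * (k * i) + c * i := by ring
        _ = q * (k * i) + (q * m + (i + 1)) := by rw [hci]
        _ = q * (k * i + m) + (i + 1) := by ring
    have hniq : n * i / q = k * i + m := by
      rw [hni, Nat.mul_add_div hq0, Nat.div_eq_of_lt hlt, add_zero]
    have hkey : i * (n - 1) = q * (k * i + m) + 1 := by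
      have h1 : i * (n - 1) = n * i - i := by
        rw [Nat.mul_sub, mul_one, mul_comm]
      omega
    rw [hniq]
    set g := Nat.gcd (k * i + m) (n - 1) with hg
    have ha : g ∣ k * i + m := Nat.gcd_dvd_left _ _
    have hb : g ∣ n - 1 := Nat.gcd_dvd_right _ _
    have h1 : g ∣ q * (k * i + m) := ha.mul_left q
    have h2 : g ∣ i * (n - 1) := hb.mul_left i
    have h3 : g ∣ 1 := by
      have := Nat.dvd_sub h2 h1
      rwa [hkey, Nat.add_sub_cancel_left] at this
    exact Nat.dvd_one.mp h3
end

section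
/- Let p be a prime, q = p^r, and n a positive integer with p ∤ n and q ∤ (n−1). If p = 2 assume additionally q > 2 and n ≢ q−1 (mod 2q). Then there exists an integer i with 1 ≤ i ≤ q−1, gcd(i,p) = 1, such that ⌊ni/q⌋ and n−1 are relatively prime. -/
/-- Find an element of an arithmetic progression in a window of length `P`. -/
private lemma exists_step (P a b : ℕ) (hP : 0 < P) (hb : b < a + P) :
    ∃ k, a ≤ b + P * k ∧ b + P * k < a + P := by
  induction a using Nat.strong_induction_on with
  | _ a ih =>
    rcases le_or_gt a b with h | h
    · exact ⟨0, by omega, by omega⟩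
    · rcases le_or_gt a (b + P) with h2 | h2
      · exact ⟨1, by omega, by omega⟩
      · obtain ⟨k, h3, h4⟩ := ih (a - P) (by omega) (by omega)
        refine ⟨k + 1, ?_, ?_⟩ <;>
        · have hh : P * (k + 1) = P * k + P := by ring
          omega

/-- Existence of a solution of `m * j ≡ -1 (mod P)`. -/
private lemma exists_j (m P : ℕ) (hP : 1 < P) (hcop : Nat.Coprime m P) :
    ∃ j, j < P ∧ P ∣ m * j + 1 := by
  haveI : NeZero P := ⟨by omega⟩
  have hu : IsUnit (m : ZMod P) := (ZMod.isUnit_iff_coprime m P).mpr hcop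
  refine ⟨((-1 : ZMod P) * (m : ZMod P)⁻¹).val, ZMod.val_lt _, ?_⟩
  rw [← ZMod.natCast_eq_zero_iff]
  push_cast
  rw [ZMod.natCast_val, ZMod.cast_id]
  rw [← mul_assoc, mul_comm (m : ZMod P) (-1 : ZMod P), mul_assoc,
    ZMod.mul_inv_of_unit _ hu]
  ring

/-- Verification lemma: if `i` satisfies the congruence conditions, it works. -/
private lemma lemV (p e s m i : ℕ) (hp : p.Prime) (hs : 1 ≤ s)
    (hi1 : p ^ e ≤ i) (hi2 : i ≤ p ^ (e + s) - 1)
    (hdvd : p ^ s ∣ m * i + 1)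
    (hex : 1 ≤ e → ¬ p ^ (s + 1) ∣ m * i + 1) :
    1 ≤ i ∧ i ≤ p ^ (e + s) - 1 ∧ Nat.gcd i p = 1 ∧
      Nat.gcd ((p ^ e * m + 1) * i / p ^ (e + s)) (p ^ e * m) = 1 := by
  have hp1 : 1 < p := hp.one_lt
  have hpe : 0 < p ^ e := pow_pos (by omega) e
  have hps : 0 < p ^ s := pow_pos (by omega) s
  have hpes : 0 < p ^ (e + s) := pow_pos (by omega) (e + s)
  obtain ⟨w, hw⟩ := hdvd
  have hpdvd_i : ¬ p ∣ i := by
    intro hdi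
    have h1 : p ∣ m * i + 1 := dvd_trans (dvd_pow_self p (by omega : s ≠ 0)) ⟨w, hw⟩
    have h2 : p ∣ m * i := Dvd.dvd.mul_left hdi m
    have h3 : p ∣ 1 := by
      have := Nat.dvd_sub h1 h2
      rwa [Nat.add_sub_cancel_left] at this
    have := Nat.dvd_one.mp h3
    omega
  have hgcd_ip : Nat.gcd i p = 1 :=
    Nat.coprime_comm.mp (hp.coprime_iff_not_dvd.mpr hpdvd_i)
  have h2 : p ^ (e + s) * w = p ^ e * (m * i) + p ^ e := by
    rw [pow_add, mul_assoc, ← hw]; ring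
  have h3 : (p ^ e * m + 1) * i = p ^ e * (m * i) + i := by ring
  have hkey : (p ^ e * m + 1) * i = p ^ (e + s) * w + (i - p ^ e) := by omega
  have hlt : i - p ^ e < p ^ (e + s) := by omega
  have hdiv : (p ^ e * m + 1) * i / p ^ (e + s) = w := by
    rw [hkey, Nat.mul_add_div hpes, Nat.div_eq_of_lt hlt, add_zero]
  rw [hdiv]
  refine ⟨by omega, hi2, hgcd_ip, ?_⟩
  have c2 : Nat.Coprime w m := by
    have d1 : Nat.gcd w m ∣ m * i + 1 := by
      rw [hw]; exact Dvd.dvd.mul_left (Nat.gcd_dvd_left w m) _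
    have d2 : Nat.gcd w m ∣ m * i := Dvd.dvd.mul_right (Nat.gcd_dvd_right w m) i
    have hone : Nat.gcd w m ∣ 1 := by
      have := Nat.dvd_sub d1 d2
      rwa [Nat.add_sub_cancel_left] at this
    exact Nat.dvd_one.mp hone
  have c1 : Nat.Coprime w (p ^ e) := by
    rcases Nat.eq_zero_or_pos e with he | he
    · rw [he, pow_zero]; exact Nat.coprime_one_right w
    · have hnd : ¬ p ∣ w := by
        intro hdw
        apply hex he
        rw [hw, pow_succ]
        exact mul_dvd_mul_left _ hdw
      exact (Nat.coprime_comm.mp (hp.coprime_iff_not_dvd.mpr hnd)).pow_right e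
  exact Nat.Coprime.mul_right c1 c2

/-- `p` prime, `q = p^r`, `p ∤ n`, `q ∤ (n-1)`; if `p = 2`
additionally `q > 2` and `n ≢ q-1 (mod 2q)`. Then there is `i` with
`1 ≤ i ≤ q-1`, `gcd(i,p) = 1` and `gcd(⌊n i/q⌋, n-1) = 1`. -/
theorem stmt5 (p r n : ℕ) (hp : p.Prime) (hr : 1 ≤ r) (hn : 0 < n)
    (hpn : ¬ p ∣ n) (hq : ¬ p ^ r ∣ (n - 1))
    (h2 : p = 2 → 2 < p ^ r ∧ ¬ n ≡ p ^ r - 1 [MOD 2 * p ^ r]) :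
    ∃ i : ℕ, 1 ≤ i ∧ i ≤ p ^ r - 1 ∧ Nat.gcd i p = 1 ∧
      Nat.gcd (n * i / p ^ r) (n - 1) = 1 := by
  have hp1 : 1 < p := hp.one_lt
  have hn2 : 2 ≤ n := by
    by_contra h
    have hone : n = 1 := by omega
    subst hone
    exact hq (by simp)
  set N : ℕ := n - 1 with hN
  have hN1 : 1 ≤ N := by omega
  set e : ℕ := N.factorization p with he
  set m : ℕ := N / p ^ e with hm
  have hNfac : p ^ e * m = N := Nat.ordProj_mul_ordCompl_eq_self N p
  have hpm : ¬ p ∣ m := Nat.not_dvd_ordCompl hp (by omega)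
  have he_lt : e < r := by
    by_contra h
    push_neg at h
    exact hq (dvd_trans (pow_dvd_pow p h) (Nat.ordProj_dvd N p))
  set s : ℕ := r - e with hsdef
  have hes : e + s = r := by omega
  have hs1 : 1 ≤ s := by omega
  have hps1 : 1 < p ^ s := Nat.one_lt_pow (by omega) hp1
  have hpe0 : 0 < p ^ e := pow_pos (by omega) e
  have hcop : Nat.Coprime m (p ^ s) :=
    Nat.Coprime.pow_right s (Nat.coprime_comm.mp (hp.coprime_iff_not_dvd.mpr hpm))
  obtain ⟨j, hjP, hjd⟩ := exists_j m (p ^ s) hps1 hcop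
  have hj1 : 1 ≤ j := by
    rcases Nat.eq_zero_or_pos j with h | h
    · subst h
      simp at hjd
      omega
    · exact h
  -- find a suitable i
  obtain ⟨i, hI1, hI2, hId, hIex⟩ :
      ∃ i, p ^ e ≤ i ∧ i ≤ p ^ (e + s) - 1 ∧ p ^ s ∣ m * i + 1 ∧
        (1 ≤ e → ¬ p ^ (s + 1) ∣ m * i + 1) := by
    by_cases he0 : e = 0
    · refine ⟨j, ?_, ?_, hjd, fun h1 => absurd h1 (by omega)⟩
      · rw [he0, pow_zero]; omega
      · have hpow : p ^ (e + s) = p ^ s := by rw [he0, zero_add]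
        omega
    · have he1 : 1 ≤ e := by omega
      have step2 : ∀ i₀ : ℕ, p ^ (s + 1) ∣ m * i₀ + 1 →
          p ^ (s + 1) ∣ m * (i₀ + p ^ s) + 1 → False := by
        intro i₀ hx hy
        have hdiff : m * (i₀ + p ^ s) + 1 = (m * i₀ + 1) + p ^ s * m := by ring
        have hdm : p ^ (s + 1) ∣ p ^ s * m := by
          have := Nat.dvd_sub hy hx
          rwa [hdiff, Nat.add_sub_cancel_left] at this
        rw [pow_succ] at hdm
        have : p ∣ m := (mul_dvd_mul_iff_left (pow_ne_zero s (by omega : p ≠ 0))).mp hdm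
        exact hpm this
      have hdvd_shift : ∀ i₀ k : ℕ, p ^ s ∣ m * i₀ + 1 → p ^ s ∣ m * (i₀ + p ^ s * k) + 1 := by
        intro i₀ k h
        have heq : m * (i₀ + p ^ s * k) + 1 = (m * i₀ + 1) + p ^ s * (m * k) := by ring
        rw [heq]
        exact dvd_add h (dvd_mul_right _ _)
      by_cases hsp : p = 2 ∧ e = 1
      · -- special case p = 2, e = 1
        obtain ⟨hp2, he1'⟩ := hsp
        have hr2 : 2 ≤ r := by
          by_contra hcon
          have hr1 : r = 1 := by omega
          have hh := (h2 hp2).1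
          rw [hr1, pow_one, hp2] at hh
          omega
        have hsr : s + 1 = r := by omega
        have hpow2 : p ^ (e + s) = p ^ s * 2 := by
          rw [pow_add, he1', pow_one, hp2]; ring
        have hpe2 : p ^ e = p := by rw [he1', pow_one]
        have hjodd : ¬ 2 ∣ j := by
          intro hdj
          have h1 : 2 ∣ m * j + 1 := by
            refine dvd_trans ?_ hjd
            rw [← hp2]
            exact dvd_pow_self p (by omega : s ≠ 0)
          have h3 : 2 ∣ m * j := Dvd.dvd.mul_left hdj m
          omega
        by_cases hj3 : 3 ≤ j
        · -- two candidates j and j + p^s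
          have hd2 : p ^ s ∣ m * (j + p ^ s * 1) + 1 := hdvd_shift j 1 hjd
          rw [mul_one] at hd2
          have hrange : j + p ^ s ≤ p ^ (e + s) - 1 := by omega
          by_cases hx : p ^ (s + 1) ∣ m * j + 1
          · exact ⟨j + p ^ s, by omega, hrange, hd2, fun _ hy => step2 j hx hy⟩
          · exact ⟨j, by omega, by omega, hjd, fun _ => hx⟩
        · -- j = 1
          have hjeq : j = 1 := by omega
          subst hjeq
          have hd2 : p ^ s ∣ m * (1 + p ^ s * 1) + 1 := hdvd_shift 1 1 hjd
          rw [mul_one] at hd2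
          refine ⟨1 + p ^ s, by omega, by omega, hd2, fun _ hy => ?_⟩
          · -- derive n ≡ 2^r - 1 mod 2·2^r, contradiction
            obtain ⟨c, hc⟩ := hjd
            rw [mul_one] at hc
            have hkey : m * (1 + p ^ s) + 1 = p ^ s * (c + m) := by
              have h1 : m * (1 + p ^ s) + 1 = (m + 1) + p ^ s * m := by ring
              rw [h1, hc]; ring
            rw [hkey, pow_succ] at hy
            have hcm : p ∣ c + m :=
              (mul_dvd_mul_iff_left (pow_ne_zero s (by omega : p ≠ 0))).mp hy
            rw [hp2] at hcm
            have hmodd : ¬ 2 ∣ m := by rw [← hp2]; exact hpm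
            obtain ⟨d, hdd⟩ : ∃ d, c = 2 * d + 1 := ⟨c / 2, by omega⟩
            have hnm2 : n = 2 * m + 1 := by
              have hh : p ^ e * m = N := hNfac
              rw [he1', pow_one, hp2] at hh
              omega
            have h5 : p ^ r = 2 * p ^ s := by
              rw [← hsr, pow_succ, hp2]; ring
            have hB : p ^ s * c = 2 * (p ^ s * d) + p ^ s := by rw [hdd]; ring
            have h9 : (2 * p ^ r) * d = 4 * (p ^ s * d) := by rw [h5]; ring
            have hmod : n = (p ^ r - 1) + d * (2 * p ^ r) := by
              have h10 : d * (2 * p ^ r) = (2 * p ^ r) * d := by ring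
              omega
            have hcongr : n ≡ p ^ r - 1 [MOD 2 * p ^ r] := by
              show n % (2 * p ^ r) = (p ^ r - 1) % (2 * p ^ r)
              rw [hmod, Nat.add_mul_mod_self_right]
            exact (h2 hp2).2 hcongr
      · -- general case: 3 ≤ p or 2 ≤ e
        have hin : p ^ e + 2 * p ^ s ≤ p ^ (e + s) := by
          rw [pow_add]
          rcases Nat.lt_or_ge p 3 with hlp | hlp
          · have hp2 : p = 2 := by omega
            have he2 : 2 ≤ e := by
              rcases Nat.eq_or_lt_of_le he1 with h | h
              · exact absurd ⟨hp2, h.symm⟩ hsp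
              · omega
            have hA : 4 ≤ p ^ e := by
              calc (4 : ℕ) = 2 ^ 2 := by norm_num
                _ ≤ p ^ e := by
                    rw [hp2]; exact Nat.pow_le_pow_right (by omega) he2
            have hB : 2 ≤ p ^ s := by omega
            nlinarith [hA, hB]
          · have hA : 3 ≤ p ^ e := by
              calc (3 : ℕ) ≤ p := hlp
                _ = p ^ 1 := (pow_one p).symm
                _ ≤ p ^ e := Nat.pow_le_pow_right (by omega) he1
            have hB : 3 ≤ p ^ s := by
              calc (3 : ℕ) ≤ p := hlp
                _ = p ^ 1 := (pow_one p).symm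
                _ ≤ p ^ s := Nat.pow_le_pow_right (by omega) hs1
            nlinarith [hA, hB]
        obtain ⟨k, hk1, hk2⟩ := exists_step (p ^ s) (p ^ e) j (by omega) (by omega)
        set i₁ : ℕ := j + p ^ s * k with hi₁
        have hd1 : p ^ s ∣ m * i₁ + 1 := hdvd_shift j k hjd
        have hd2 : p ^ s ∣ m * (i₁ + p ^ s) + 1 := by
          have hh := hdvd_shift j (k + 1) hjd
          have heq : j + p ^ s * (k + 1) = i₁ + p ^ s := by rw [hi₁]; ring
          rwa [heq] at hh
        by_cases hx : p ^ (s + 1) ∣ m * i₁ + 1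
        · exact ⟨i₁ + p ^ s, by omega, by omega, hd2, fun _ hy => step2 i₁ hx hy⟩
        · exact ⟨i₁, hk1, by omega, hd1, fun _ => hx⟩
  -- apply the verification lemma
  have hnm : n = p ^ e * m + 1 := by omega
  obtain ⟨c1, c2, c3, c4⟩ := lemV p e s m i hp hs1 hI1 hI2 hId hIex
  refine ⟨i, c1, by rwa [hes] at c2, c3, ?_⟩
  rw [hnm, ← hNfac, ← hes]
  exact c4
end

section
/- Let p = 2, q = 2^r with r ≥ 2, and suppose n is a positive odd integer with q | (n+1) and n ≢ q−1 (mod 2q), so that k = (n+1)/q is even. Set i = 2^{r−1} − 1. Then i is odd, ⌊ni/q⌋ = (2^{r−1}−1)k − 1, and gcd(n−1, ⌊ni/q⌋) = 1. -/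
/-- `q = 2^r` with `r ≥ 2`, `n` a positive odd integer with
`q ∣ n+1` and `k = (n+1)/q` even. Set `i = 2^(r-1) - 1`. Then `i` is odd,
`⌊n i/q⌋ = (2^(r-1) - 1)·k − 1`, and `gcd(n-1, ⌊n i/q⌋) = 1`. -/
theorem stmt6 (r n : ℕ) (hr : 2 ≤ r) (hn : 0 < n) (hodd : Odd n)
    (hdvd : 2 ^ r ∣ (n + 1)) (k : ℕ) (hk : k = (n + 1) / 2 ^ r)
    (hkeven : Even k) (i : ℕ) (hi : i = 2 ^ (r - 1) - 1) :
    Odd i ∧ n * i / 2 ^ r = (2 ^ (r - 1) - 1) * k - 1 ∧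
      Nat.gcd (n - 1) (n * i / 2 ^ r) = 1 := by
  obtain ⟨m, hm⟩ := hkeven
  have h1 : 2 ^ r * k = n + 1 := by rw [hk]; exact Nat.mul_div_cancel' hdvd
  have hP4 : 2 ^ r = 4 * 2 ^ (r - 2) := by
    have h : 2 ^ r = 2 ^ (r - 2) * 2 ^ 2 := by rw [← pow_add]; congr 1; omega
    omega
  have hP2 : 2 ^ (r - 1) = 2 * 2 ^ (r - 2) := by
    have h : 2 ^ (r - 1) = 2 ^ (r - 2) * 2 ^ 1 := by rw [← pow_add]; congr 1; omega
    omega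
  set P := 2 ^ (r - 2) with hPdef
  have hPpos : 1 ≤ P := Nat.one_le_two_pow
  have hn1 : n + 1 = 8 * (P * m) := by
    rw [← h1, hP4, hm]; ring
  have hiP : i + 1 = 2 * P := by
    rw [hi, hP2]; omega
  have hm1 : 1 ≤ m := by
    rcases Nat.eq_zero_or_pos m with h | h
    · subst h; simp at hn1
    · exact h
  set c := 2 * (m * i) - 1 with hcdef
  have hipos : 1 ≤ i := by omega
  have hc2 : c + 1 = 2 * (m * i) := by
    have hle : 1 ≤ m * i := Nat.one_le_iff_ne_zero.mpr (Nat.mul_ne_zero (by omega) (by omega))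
    omega
  have hnZ : (n : ℤ) + 1 = 8 * (P * m) := by exact_mod_cast hn1
  have hiZ : (i : ℤ) + 1 = 2 * P := by exact_mod_cast hiP
  have hcZ : (c : ℤ) + 1 = 2 * (m * i) := by exact_mod_cast hc2
  have keyZ : (n : ℤ) * i = 4 * P * c + (2 * P + 1) := by
    linear_combination (i : ℤ) * hnZ - hiZ - 4 * (P : ℤ) * hcZ
  have key : n * i = 4 * P * c + (2 * P + 1) := by exact_mod_cast keyZ
  have hdiv : n * i / 2 ^ r = c := by
    rw [hP4, key, Nat.mul_add_div (by omega), Nat.div_eq_of_lt (by omega)]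
    omega
  refine ⟨⟨P - 1, by omega⟩, ?_, ?_⟩
  · rw [hdiv, ← hi, hm]
    have h2 : i * (m + m) = 2 * (m * i) := by ring
    omega
  · rw [hdiv]
    have hTm : m * i + m = 2 * (P * m) := by
      calc m * i + m = m * (i + 1) := by ring
      _ = m * (2 * P) := by rw [hiP]
      _ = 2 * (P * m) := by ring
    have he : n - 1 = 2 * c + 4 * m := by omega
    set d := Nat.gcd (n - 1) c with hd
    have hd1 : d ∣ n - 1 := Nat.gcd_dvd_left _ _
    have hd2 : d ∣ c := Nat.gcd_dvd_right _ _
    have h4m : d ∣ 4 * m := by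
      have h2c : d ∣ 2 * c := hd2.mul_left 2
      have hs := Nat.dvd_sub hd1 h2c
      rw [he] at hs; simpa using hs
    have hdo : ¬ 2 ∣ d := by
      intro h
      have h2c : 2 ∣ c := h.trans hd2
      omega
    have hco : Nat.Coprime d 4 := by
      have h2 : Nat.Coprime d 2 :=
        Nat.coprime_two_right.mpr (Nat.odd_iff.mpr (by omega))
      have := h2.pow_right 2
      norm_num at this
      exact this
    have hdm : d ∣ m := by
      have := h4m
      rw [mul_comm] at this
      exact hco.dvd_of_dvd_mul_right this
    have hfin : d ∣ c + 1 := by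
      rw [hc2]; exact (hdm.mul_right i).mul_left 2
    have hone : d ∣ 1 := by
      have := Nat.dvd_sub hfin hd2
      simpa using this
    exact Nat.dvd_one.mp hone
end

section
/- Let g₁ and g₂ be nonzero finite-dimensional simple Lie algebras over a field of characteristic zero, and let g ⊆ g₁ ⊕ g₂ be a semisimple Lie subalgebra such that both projections g → g₁ and g → g₂ are surjective. Then either g = g₁ ⊕ g₂, or there exists a Lie algebra isomorphism φ: g₁ ≅ g₂ such that g is the graph of φ. In particular, if g₁ and g₂ are not isomorphic, then g = g₁ ⊕ g₂. -/
/-!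
Goursat's lemma for Lie algebras. Let `p₁ : g → g₁` and `p₂ : g → g₂` be the projections. As `p₁`
is onto, `p₁ (ker p₂) = {a | (a, 0) ∈ g}` is an ideal of the simple algebra `g₁`. If it is all of
`g₁`, surjectivity of `p₂` gives `g = g₁ × g₂`; if it is zero, `p₂` is injective. Arguing
symmetrically for `p₁`, a proper `g` is the graph of the isomorphism `p₂ ∘ p₁⁻¹`.
-/

section ProdLie

variable (R : Type*) [CommRing R]
variable (L1 L2 : Type*) [LieRing L1] [LieRing L2] [LieAlgebra R L1] [LieAlgebra R L2]

/-- The product of two Lie rings, with componentwise bracket. -/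
instance Prod.instLieRing : LieRing (L1 × L2) where
  bracket x y := (⁅x.1, y.1⁆, ⁅x.2, y.2⁆)
  add_lie x y z := by ext <;> simp [add_lie]
  lie_add x y z := by ext <;> simp [lie_add]
  lie_self x := by ext <;> simp
  leibniz_lie x y z := by ext <;> simp

/-- The product of two Lie algebras. -/
instance Prod.instLieAlgebra : LieAlgebra R (L1 × L2) where
  lie_smul t x y := by ext; exacts [lie_smul t x.1 y.1, lie_smul t x.2 y.2]

end ProdLie

open Function

namespace LieHom

variable {R L L₁ L₂ : Type*} [CommRing R] [LieRing L] [LieAlgebra R L]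
  [LieRing L₁] [LieAlgebra R L₁] [LieRing L₂] [LieAlgebra R L₂]
  {f₁ : L →ₗ⁅R⁆ L₁} {f₂ : L →ₗ⁅R⁆ L₂}

theorem exists_apply_eq_and_apply_eq_of_map_ker_eq_top (h₁ : Surjective f₁)
    (h₂ : Surjective f₂) (htop : f₂.ker.map f₁ = ⊤) (a : L₁) (b : L₂) :
    ∃ x, f₁ x = a ∧ f₂ x = b := by
  obtain ⟨y, rfl⟩ := h₂ b
  obtain ⟨⟨k, hk⟩, hka⟩ :=
    LieIdeal.mem_map_of_surjective h₁ (htop ▸ LieSubmodule.mem_top (a - f₁ y))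
  exact ⟨y + k, by simp [hka], by simp [f₂.mem_ker.1 hk]⟩

theorem injective_of_map_ker_eq_bot (hker : f₁.ker ⊓ f₂.ker = ⊥)
    (hbot : f₂.ker.map f₁ = ⊥) : Injective f₂ := by
  rw [← ker_eq_bot, eq_bot_iff, ← hker]
  exact le_inf (LieIdeal.map_eq_bot_iff.1 hbot) le_rfl

theorem exists_apply_eq_and_apply_eq_or_injective [LieAlgebra.IsSimple R L₁]
    (h₁ : Surjective f₁) (h₂ : Surjective f₂) (hker : f₁.ker ⊓ f₂.ker = ⊥) :
    (∀ a b, ∃ x, f₁ x = a ∧ f₂ x = b) ∨ Injective f₂ :=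
  (LieAlgebra.IsSimple.eq_bot_or_eq_top (f₂.ker.map f₁)).symm.imp
    (exists_apply_eq_and_apply_eq_of_map_ker_eq_top h₁ h₂) (injective_of_map_ker_eq_bot hker)

end LieHom

namespace LieSubalgebra

variable {R L₁ L₂ : Type*} [CommRing R] [LieRing L₁] [LieAlgebra R L₁]
  [LieRing L₂] [LieAlgebra R L₂] (g : LieSubalgebra R (L₁ × L₂))

theorem ker_fst_comp_incl_inf_ker_snd_comp_incl :
    ((LieHom.fst R L₁ L₂).comp g.incl).ker ⊓ ((LieHom.snd R L₁ L₂).comp g.incl).ker = ⊥ := by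
  refine _root_.eq_bot_iff.2 fun x hx => ?_
  obtain ⟨hx₁, hx₂⟩ := (LieSubmodule.mem_inf _ _ x).1 hx
  exact (LieSubmodule.mem_bot x).2 (Subtype.ext (Prod.ext (LieHom.mem_ker.1 hx₁)
    (LieHom.mem_ker.1 hx₂)))

theorem forall_mem_of_exists_fst_eq_and_snd_eq
    (h : ∀ a b, ∃ x : g, (x : L₁ × L₂).1 = a ∧ (x : L₁ × L₂).2 = b) (x : L₁ × L₂) : x ∈ g := by
  obtain ⟨y, hy₁, hy₂⟩ := h x.1 x.2
  exact Prod.ext hy₁ hy₂ ▸ y.2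

theorem mem_iff_of_bijective (h₁ : Bijective ((LieHom.fst R L₁ L₂).comp g.incl))
    (h₂ : Bijective ((LieHom.snd R L₁ L₂).comp g.incl)) (x : L₁ × L₂) :
    x ∈ g ↔ ((LieEquiv.ofBijective _ h₁).symm.trans (LieEquiv.ofBijective _ h₂)) x.1 = x.2 := by
  set e₁ := LieEquiv.ofBijective _ h₁
  refine ⟨fun hx => ?_, fun hx => ?_⟩
  · change ((e₁.symm (e₁ ⟨x, hx⟩) : g) : L₁ × L₂).2 = x.2
    rw [e₁.symm_apply_apply]
  · have hfst : ((e₁.symm x.1 : g) : L₁ × L₂).1 = x.1 := e₁.apply_symm_apply x.1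
    exact Prod.ext hfst hx ▸ (e₁.symm x.1).2

end LieSubalgebra

theorem stmt13_general (Q : Type*) [Field Q]
    (g₁ g₂ : Type*) [LieRing g₁] [LieAlgebra Q g₁] [LieRing g₂] [LieAlgebra Q g₂]
    [LieAlgebra.IsSimple Q g₁] [LieAlgebra.IsSimple Q g₂]
    (g : LieSubalgebra Q (g₁ × g₂))
    (hsurj1 : Function.Surjective fun x : g => (x : g₁ × g₂).1)
    (hsurj2 : Function.Surjective fun x : g => (x : g₁ × g₂).2) :
    ((∀ x : g₁ × g₂, x ∈ g) ∨
      ∃ e : g₁ ≃ₗ⁅Q⁆ g₂, ∀ x : g₁ × g₂, x ∈ g ↔ e x.1 = x.2) ∧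
    (IsEmpty (g₁ ≃ₗ⁅Q⁆ g₂) → ∀ x : g₁ × g₂, x ∈ g) := by
  have h₁ : Surjective ((LieHom.fst Q g₁ g₂).comp g.incl) := hsurj1
  have h₂ : Surjective ((LieHom.snd Q g₁ g₂).comp g.incl) := hsurj2
  have hker := g.ker_fst_comp_incl_inf_ker_snd_comp_incl
  have main : (∀ x : g₁ × g₂, x ∈ g) ∨
      ∃ e : g₁ ≃ₗ⁅Q⁆ g₂, ∀ x : g₁ × g₂, x ∈ g ↔ e x.1 = x.2 := by
    rcases LieHom.exists_apply_eq_and_apply_eq_or_injective h₁ h₂ hker with hboth | hinj₂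
    · exact .inl (g.forall_mem_of_exists_fst_eq_and_snd_eq hboth)
    rcases LieHom.exists_apply_eq_and_apply_eq_or_injective h₂ h₁
      ((inf_comm _ _).trans hker) with hboth | hinj₁
    · exact .inl (g.forall_mem_of_exists_fst_eq_and_snd_eq fun a b =>
        (hboth b a).imp fun _ => And.symm)
    exact .inr ⟨_, g.mem_iff_of_bijective ⟨hinj₁, h₁⟩ ⟨hinj₂, h₂⟩⟩
  exact ⟨main, fun h => main.resolve_right fun ⟨e, _⟩ => h.elim e⟩

/-- if `g₁`, `g₂` are nonzero finite-dimensional simple Lie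
algebras over a field of characteristic zero and `g ⊆ g₁ ⊕ g₂` is a
semisimple Lie subalgebra projecting onto both factors, then either
`g = g₁ ⊕ g₂` or `g` is the graph of a Lie algebra isomorphism `g₁ ≅ g₂`;
in particular, if `g₁` and `g₂` are not isomorphic, `g = g₁ ⊕ g₂`. -/
theorem stmt13 (Q : Type*) [Field Q] [CharZero Q]
    (g₁ g₂ : Type*) [LieRing g₁] [LieAlgebra Q g₁] [LieRing g₂] [LieAlgebra Q g₂]
    [Nontrivial g₁] [Nontrivial g₂]
    [Module.Finite Q g₁] [Module.Finite Q g₂]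
    [LieAlgebra.IsSimple Q g₁] [LieAlgebra.IsSimple Q g₂]
    (g : LieSubalgebra Q (g₁ × g₂))
    (hss : LieAlgebra.IsSemisimple Q g)
    (hsurj1 : Function.Surjective fun x : g => (x : g₁ × g₂).1)
    (hsurj2 : Function.Surjective fun x : g => (x : g₁ × g₂).2) :
    ((∀ x : g₁ × g₂, x ∈ g) ∨
      ∃ e : g₁ ≃ₗ⁅Q⁆ g₂, ∀ x : g₁ × g₂, x ∈ g ↔ e x.1 = x.2) ∧
    (IsEmpty (g₁ ≃ₗ⁅Q⁆ g₂) → ∀ x : g₁ × g₂, x ∈ g) :=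
  stmt13_general Q g₁ g₂ g hsurj1 hsurj2
end

section
/- Let C be algebraically closed of characteristic zero, n ≥ 2, and a₁,…,a_d distinct positive integers with 1 ≤ a_i < n and a_i ≠ n − a_j for all i, j. Let W₁,…,W_d be n-dimensional C-vector spaces, W = ⊕ W_i, and let k ⊆ ⊕_{i=1}^d sl(W_i) be a semisimple Lie subalgebra such that (i) each projection k → sl(W_i) is surjective, and (ii) there exists a semisimple element f ∈ k acting on each W_i with exactly two eigenvalues of multiplicities a_i and n − a_i. Then k = ⊕_{i=1}^d sl(W_i). -/
open Module

section PiLie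

variable (R : Type*) [CommRing R] (ι : Type*)
variable (L : ι → Type*) [∀ i, LieRing (L i)] [∀ i, LieAlgebra R (L i)]

/-- The product of a family of Lie rings, with componentwise bracket. -/
instance Pi.instLieRing : LieRing (∀ i, L i) where
  bracket x y := fun i => ⁅x i, y i⁆
  add_lie x y z := by funext i; simp [add_lie]
  lie_add x y z := by funext i; simp [lie_add]
  lie_self x := by funext i; simp
  leibniz_lie x y z := by funext i; simp

/-- The product of a family of Lie algebras. -/
instance Pi.instLieAlgebra : LieAlgebra R (∀ i, L i) where
  lie_smul t x y := by funext i; exact lie_smul t (x i) (y i)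

end PiLie

attribute [local instance 100] LieRing.ofAssociativeRing

/-!
Let `πᵢ : k → sl(Wᵢ)` be the coordinate projections: they are surjective and `sl(Wᵢ)` is simple.
A Lie algebra mapping onto finitely many simple Lie algebras by maps with pairwise distinct kernels
maps onto their product (a Goursat-type argument: `πⱼ` sends the ideal `⋂_{i ≠ j} ker πᵢ` onto
`sl(Wⱼ)`). If `ker πᵢ = ker πⱼ`, then `πⱼ ∘ πᵢ⁻¹` is an isomorphism `sl(Wᵢ) ≅ sl(Wⱼ)` sending
`fᵢ` to `fⱼ`, so `ad fᵢ` and `ad fⱼ` have eigenspaces of equal dimensions. When `f` has eigenvalues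
`α ≠ β` of multiplicities `a` and `n - a`, the nonzero eigenvalues of `ad f` are `±(α - β)`, with
eigenspaces `Hom(V_β, V_α)` and `Hom(V_α, V_β)` of dimension `a (n - a)`. Hence
`aᵢ (n - aᵢ) = aⱼ (n - aⱼ)`, i.e. `aᵢ = aⱼ` or `aᵢ + aⱼ = n`, both excluded.
-/

namespace Matrix

variable {K n : Type*} [Field K] [Fintype n] [DecidableEq n]

theorem lie_single_lie_single (p q : n) (hpq : p ≠ q) (x : Matrix n n K) :
    ⁅single p q (1 : K), ⁅single p q (1 : K), x⁆⁆ = (-2 * x q p) • single p q 1 := by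
  set E := single p q (1 : K)
  have hsq : E * E = 0 := single_mul_single_of_ne 1 p q p hpq.symm 1
  calc ⁅E, ⁅E, x⁆⁆ = E * E * x - (2 : K) • (E * x * E) + x * (E * E) := by
        simp only [Ring.lie_def, two_smul]; noncomm_ring
    _ = (-2 * x q p) • E := by
        rw [hsq, single_mul_mul_single, smul_single]; simp [E, smul_single]

theorem lie_single_of_isDiag (p q : n) {x : Matrix n n K} (hx : x.IsDiag) :
    ⁅single p q (1 : K), x⁆ = (x q q - x p p) • single p q 1 := by
  rw [← hx.diagonal_diag]
  ext i j
  by_cases hi : p = i <;> by_cases hj : q = j <;>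
    simp [Ring.lie_def, mul_diagonal, hi, hj, eq_comm]

variable [CharZero K] {I : LieIdeal K (Matrix n n K)}

theorem exists_single_mem_lieIdeal {x : Matrix n n K} (hx : x ∈ I) (htr : x.trace = 0)
    (hne : x ≠ 0) : ∃ p q, p ≠ q ∧ single p q (1 : K) ∈ I := by
  by_cases hdiag : x.IsDiag
  · obtain ⟨p, q, hpq⟩ : ∃ p q, x p p ≠ x q q := by
      by_contra! hall
      obtain ⟨i, -⟩ : ∃ i j, x i j ≠ 0 := by simpa [← Matrix.ext_iff] using hne
      have : Nonempty n := ⟨i⟩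
      have hxii : x i i = 0 := by
        have htr' : x.trace = Fintype.card n • x i i := by simp [trace, fun p => hall p i]
        simpa [htr', Fintype.card_ne_zero] using htr
      exact hne (by rw [← hdiag.diagonal_diag]; ext p q; simp [diagonal_apply, hall p i, hxii])
    refine ⟨p, q, fun h => hpq (h ▸ rfl),
      (I.toSubmodule.smul_mem_iff (sub_ne_zero.mpr hpq.symm)).mp ?_⟩
    rw [← lie_single_of_isDiag p q hdiag]
    exact I.lie_mem hx
  · obtain ⟨q, p, hqp, hxqp⟩ : ∃ q p, q ≠ p ∧ x q p ≠ 0 := by simpa [IsDiag, Pairwise] using hdiag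
    refine ⟨p, q, hqp.symm,
      (I.toSubmodule.smul_mem_iff (mul_ne_zero (by norm_num : (-2 : K) ≠ 0) hxqp)).mp ?_⟩
    rw [← lie_single_lie_single p q hqp.symm]
    exact I.lie_mem (I.lie_mem hx)

theorem single_mem_lieIdeal_of_single_mem {p q : n} (hpq : p ≠ q)
    (hmem : single p q (1 : K) ∈ I) {i j : n} (hij : i ≠ j) : single i j (1 : K) ∈ I := by
  have hcol : ∀ {p q i : n}, i ≠ q → single p q (1 : K) ∈ I → single i q (1 : K) ∈ I :=
    fun {p q i} hiq h => by simpa [Ring.lie_def, hiq.symm] using I.lie_mem (x := single i p 1) h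
  have hrow : ∀ {p q j : n}, j ≠ p → single p q (1 : K) ∈ I → single p j (1 : K) ∈ I :=
    fun {p q j} hjp h => by
      simpa [Ring.lie_def, hjp] using I.neg_mem (I.lie_mem (x := single q j 1) h)
  by_cases hiq : i = q
  · subst hiq
    have hqp : single i p (1 : K) ∈ I := by
      refine (I.toSubmodule.smul_mem_iff (by simp : (-2 * single p i (1 : K) p i) ≠ 0)).mp ?_
      rw [← lie_single_lie_single i p hpq.symm]
      exact I.lie_mem (I.lie_mem hmem)
    exact hrow hij.symm hqp
  · exact hrow hij.symm (hcol hiq hmem)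

theorem mem_lieIdeal_of_trace_eq_zero {x : Matrix n n K} (hx : x ∈ I) (htr : x.trace = 0)
    (hne : x ≠ 0) {u : Matrix n n K} (hu : u.trace = 0) : u ∈ I := by
  obtain ⟨p, q, hpq, hmem⟩ := exists_single_mem_lieIdeal hx htr hne
  have hlie : ∀ i j : n, ⁅single i p (1 : K), single p j 1⁆ ∈ I := by
    intro i j
    by_cases hjp : j = p
    · subst hjp
      by_cases hij : i = j
      · simp [hij]
      · simpa [Ring.lie_def, Ne.symm hij] using single_mem_lieIdeal_of_single_mem hpq hmem hij
    · exact I.lie_mem (single_mem_lieIdeal_of_single_mem hpq hmem (Ne.symm hjp))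
  -- `⁅Eᵢₚ, Eₚⱼ⁆ = Eᵢⱼ - δᵢⱼ Eₚₚ`, and the correction terms add up to `(trace u) • Eₚₚ = 0`.
  have hu' : u = ∑ i, ∑ j, u i j • ⁅single i p (1 : K), single p j 1⁆ := by
    have hbr : ∀ i j : n, ⁅single i p (1 : K), single p j 1⁆ =
        single i j 1 - if j = i then single p p (1 : K) else 0 := by
      intro i j
      by_cases h : j = i <;> simp [Ring.lie_def, h]
    simp only [hbr, smul_sub, smul_ite, smul_zero, Finset.sum_sub_distrib, Finset.sum_ite_eq',
      Finset.mem_univ, if_true, smul_single, smul_eq_mul, mul_one]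
    have hdiag : ∑ i, single p p (u i i) = single p p u.trace :=
      (map_sum (singleAddMonoidHom (α := K) p p) _ _).symm
    rw [hdiag, hu, single_zero, sub_zero, ← matrix_eq_sum_single]
  rw [hu']
  exact I.sum_mem fun i _ => I.sum_mem fun j _ => I.smul_mem _ (hlie i j)

end Matrix

namespace LieAlgebra.SpecialLinear

open Matrix

variable {K n : Type*} [Field K] [CharZero K] [Fintype n] [DecidableEq n]

theorem isSimple (h : 1 < Fintype.card n) : IsSimple K (sl n K) where
  non_abelian := sl_non_abelian n K h
  eq_bot_or_eq_top I := by
    refine or_iff_not_imp_left.mpr fun hI => ?_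
    obtain ⟨x, hxI, hx0⟩ : ∃ x ∈ I, x ≠ 0 := by
      by_contra! hall
      exact hI ((LieSubmodule.eq_bot_iff I).mpr hall)
    have hcard : (Fintype.card n : K) ≠ 0 := Nat.cast_ne_zero.mpr (by omega)
    -- `z` and the traceless `z - (trace z / n) • 1` have the same bracket with every matrix.
    let J : LieIdeal K (Matrix n n K) :=
      { (I : Submodule K (sl n K)).map ((sl n K).incl : sl n K →ₗ[K] Matrix n n K) with
        lie_mem := by
          rintro z _ ⟨a, haI, rfl⟩
          let z₀ : sl n K := ⟨z - (z.trace / Fintype.card n) • 1, show trace _ = 0 by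
            simp [hcard]⟩
          exact ⟨⁅z₀, a⁆, I.lie_mem haI, by simp [z₀, Ring.lie_def, sub_mul, mul_sub]⟩ }
    refine eq_top_iff.mpr fun a _ => ?_
    obtain ⟨a', ha'I, ha'⟩ : (a : Matrix n n K) ∈ J :=
      mem_lieIdeal_of_trace_eq_zero (I := J) ⟨x, hxI, rfl⟩ x.2 (by simpa using hx0) a.2
    rwa [show a' = a from Subtype.ext ha'] at ha'I

end LieAlgebra.SpecialLinear

namespace LieAlgebra

section

variable {R L : Type*} [CommRing R] [LieRing L] [LieAlgebra R L]

theorem IsSimple.of_lieEquiv {L' : Type*} [LieRing L'] [LieAlgebra R L'] [IsSimple R L]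
    (e : L ≃ₗ⁅R⁆ L') :
    IsSimple R L' where
  non_abelian h := IsSimple.non_abelian R (L := L) ((lie_abelian_iff_equiv_lie_abelian e).mpr h)
  eq_bot_or_eq_top I := by
    refine (IsSimple.eq_bot_or_eq_top (I.comap e.toLieHom)).imp (fun h => ?_) (fun h => ?_)
    · refine (LieSubmodule.eq_bot_iff I).mpr fun y hy => ?_
      have : e.symm y ∈ I.comap e.toLieHom := by simpa using hy
      simpa [h] using this
    · refine eq_top_iff.mpr fun y _ => ?_
      have : e.symm y ∈ I.comap e.toLieHom := h ▸ LieSubmodule.mem_top _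
      simpa using this

theorem IsSimple.lie_top_top [IsSimple R L] : ⁅(⊤ : LieIdeal R L), (⊤ : LieIdeal R L)⁆ = ⊤ := by
  refine (IsSimple.eq_bot_or_eq_top _).resolve_left fun h => IsSimple.non_abelian R (L := L) ?_
  rw [← LieSubmodule.lie_abelian_iff_lie_self_eq_bot] at h
  exact (lie_abelian_iff_equiv_lie_abelian LieIdeal.topEquiv).mp h

variable {L₁ L₂ : Type*} [LieRing L₁] [LieAlgebra R L₁] [LieRing L₂] [LieAlgebra R L₂]
  [IsSimple R L₁] [IsSimple R L₂] {φ : L →ₗ⁅R⁆ L₁} {ψ : L →ₗ⁅R⁆ L₂}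

theorem ker_eq_of_ker_le (hφ : Function.Surjective φ) (hψ : Function.Surjective ψ)
    (h : φ.ker ≤ ψ.ker) : φ.ker = ψ.ker := by
  refine le_antisymm h ?_
  rcases IsSimple.eq_bot_or_eq_top (ψ.ker.map φ) with hbot | htop
  · exact LieIdeal.map_eq_bot_iff.mp hbot
  · have hzero : ∀ z, ψ z = 0 := fun z => by
      obtain ⟨⟨y, hy⟩, hyz⟩ :=
        LieIdeal.mem_map_of_surjective hφ (htop ▸ LieSubmodule.mem_top (φ z))
      have : z - y ∈ ψ.ker := h (by simp [LieHom.mem_ker, hyz])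
      simpa [LieHom.mem_ker, (LieHom.mem_ker).mp hy] using this
    have := IsSimple.nontrivial R (L := L₂)
    obtain ⟨w, hw⟩ := exists_ne (0 : L₂)
    obtain ⟨z, rfl⟩ := hψ w
    exact absurd (hzero z) hw

theorem map_ker_eq_top_of_ker_ne (hφ : Function.Surjective φ) (hψ : Function.Surjective ψ)
    (h : φ.ker ≠ ψ.ker) : φ.ker.map ψ = ⊤ :=
  (IsSimple.eq_bot_or_eq_top _).resolve_left fun hbot =>
    h (ker_eq_of_ker_le hφ hψ (LieIdeal.map_eq_bot_iff.mp hbot))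

theorem map_iInf_ker_eq_top {ι : Type*} [DecidableEq ι] {S : ι → Type*} [∀ i, LieRing (S i)]
    [∀ i, LieAlgebra R (S i)] [∀ i, IsSimple R (S i)] {π : ∀ i, L →ₗ⁅R⁆ S i}
    (hπ : ∀ i, Function.Surjective (π i)) (hker : Pairwise fun i j => (π i).ker ≠ (π j).ker)
    {j : ι} {s : Finset ι} (hj : j ∉ s) : (⨅ i ∈ s, (π i).ker).map (π j) = ⊤ := by
  induction s using Finset.induction_on with
  | empty => simpa [← LieHom.idealRange_eq_map] using (π j).idealRange_eq_top_of_surjective (hπ j)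
  | insert i s _ ih =>
    rw [Finset.mem_insert, not_or] at hj
    rw [Finset.iInf_insert, eq_top_iff]
    calc ⊤ = ⁅(π i).ker.map (π j), (⨅ i ∈ s, (π i).ker).map (π j)⁆ := by
          rw [map_ker_eq_top_of_ker_ne (hπ i) (hπ j) (hker (Ne.symm hj.1)), ih hj.2,
            IsSimple.lie_top_top]
      _ = ⁅(π i).ker, ⨅ i ∈ s, (π i).ker⁆.map (π j) := (LieIdeal.map_bracket_eq _ (hπ j)).symm
      _ ≤ ((π i).ker ⊓ ⨅ i ∈ s, (π i).ker).map (π j) :=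
          LieIdeal.map_mono (LieSubmodule.lie_le_inf _ _)

theorem exists_forall_eq_of_ker_ne {ι : Type*} [Fintype ι] [DecidableEq ι] {S : ι → Type*}
    [∀ i, LieRing (S i)] [∀ i, LieAlgebra R (S i)] [∀ i, IsSimple R (S i)]
    {π : ∀ i, L →ₗ⁅R⁆ S i} (hπ : ∀ i, Function.Surjective (π i))
    (hker : Pairwise fun i j => (π i).ker ≠ (π j).ker) (x : ∀ i, S i) :
    ∃ y : L, ∀ i, π i y = x i := by
  have hlift : ∀ j, ∃ y ∈ ⨅ i ∈ Finset.univ.erase j, (π i).ker, π j y = x j := fun j => by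
    have hx : x j ∈ (⨅ i ∈ Finset.univ.erase j, (π i).ker).map (π j) := by
      rw [map_iInf_ker_eq_top hπ hker (Finset.notMem_erase j _)]; exact LieSubmodule.mem_top _
    obtain ⟨⟨y, hy⟩, hyx⟩ := LieIdeal.mem_map_of_surjective (hπ j) hx
    exact ⟨y, hy, hyx⟩
  choose y hyker hyx using hlift
  refine ⟨∑ j, y j, fun i => ?_⟩
  rw [map_sum, Finset.sum_eq_single i (fun j _ hji => ?_) (by simp), hyx]
  simp only [LieSubmodule.mem_iInf, Finset.mem_erase, LieHom.mem_ker] at hyker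
  exact hyker j i ⟨hji.symm, Finset.mem_univ i⟩

end

section

open Module

variable {K L L₁ L₂ : Type*} [Field K] [LieRing L] [LieAlgebra K L] [LieRing L₁] [LieAlgebra K L₁]
  [LieRing L₂] [LieAlgebra K L₂]

theorem _root_.LieHom.apply_mem_eigenspace_ad_iff (f : L →ₗ⁅K⁆ L₁) (x a : L) (t : K) :
    f a ∈ (ad K L₁ (f x)).eigenspace t ↔ ⁅x, a⁆ - t • a ∈ f.ker := by
  simp [LieHom.mem_ker, sub_eq_zero]

theorem finrank_eigenspace_ad_eq_of_ker_eq {φ : L →ₗ⁅K⁆ L₁} {ψ : L →ₗ⁅K⁆ L₂}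
    (hφ : Function.Surjective φ) (hψ : Function.Surjective ψ) (hker : φ.ker = ψ.ker) (x : L)
    (t : K) :
    finrank K ((ad K L₁ (φ x)).eigenspace t) = finrank K ((ad K L₂ (ψ x)).eigenspace t) := by
  have hker' : LinearMap.ker (φ : L →ₗ[K] L₁) = LinearMap.ker (ψ : L →ₗ[K] L₂) := by
    rw [← LieHom.ker_toSubmodule, ← LieHom.ker_toSubmodule, hker]
  let e : L₁ ≃ₗ[K] L₂ := ((φ : L →ₗ[K] L₁).quotKerEquivOfSurjective hφ).symm ≪≫ₗ
    Submodule.quotEquivOfEq _ _ hker' ≪≫ₗ (ψ : L →ₗ[K] L₂).quotKerEquivOfSurjective hψ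
  have he : ∀ a, e.symm (ψ a) = φ a := fun a => by
    have hφa : ((φ : L →ₗ[K] L₁).quotKerEquivOfSurjective hφ).symm (φ a) =
        Submodule.Quotient.mk a := by
      rw [LinearEquiv.symm_apply_eq, LinearMap.quotKerEquivOfSurjective_apply_mk]; rfl
    rw [LinearEquiv.symm_apply_eq]
    simp only [e, LinearEquiv.trans_apply, hφa, Submodule.quotEquivOfEq_mk,
      LinearMap.quotKerEquivOfSurjective_apply_mk]
    rfl
  suffices h : ((ad K L₁ (φ x)).eigenspace t).map (e : L₁ →ₗ[K] L₂) =
      (ad K L₂ (ψ x)).eigenspace t by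
    rw [← h, LinearEquiv.finrank_map_eq]
  ext v
  obtain ⟨a, rfl⟩ := hψ v
  rw [Submodule.mem_map_equiv, he, LieHom.apply_mem_eigenspace_ad_iff,
    LieHom.apply_mem_eigenspace_ad_iff, hker]

end

end LieAlgebra

namespace Module.End

open LieAlgebra

section

variable (R M : Type*) [CommRing R] [AddCommGroup M] [Module R M]

noncomputable def sl : LieSubalgebra R (Module.End R M) :=
  { LinearMap.ker (LinearMap.trace R M) with
    lie_mem' := fun {x y} _ _ => LinearMap.mem_ker.mpr <| by
      rw [Ring.lie_def, map_sub, LinearMap.trace_mul_comm, sub_self] }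

variable {R M}

theorem mem_sl {x : Module.End R M} : x ∈ sl R M ↔ LinearMap.trace R M x = 0 := Iff.rfl

noncomputable def slEquivMatrix {ι : Type*} [Fintype ι] [DecidableEq ι] (b : Basis ι R M) :
    sl R M ≃ₗ⁅R⁆ LieAlgebra.SpecialLinear.sl ι R :=
  LieEquiv.ofSubalgebras _ _ (LinearMap.toMatrixAlgEquiv b).toLieEquiv <| by
    ext A
    simp only [LieSubalgebra.mem_map, mem_sl, LinearMap.trace_eq_matrix_trace R b]
    exact ⟨fun ⟨f, hf, hfA⟩ => hfA ▸ hf, fun hA => ⟨(LinearMap.toMatrixAlgEquiv b).symm A,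
      (congrArg Matrix.trace ((LinearMap.toMatrixAlgEquiv b).apply_symm_apply A)).trans hA,
      by simp⟩⟩

end

variable {K V : Type*} [Field K] [AddCommGroup V] [Module K V]

theorem isSimple_sl [CharZero K] [FiniteDimensional K V] (h : 2 ≤ finrank K V) :
LieAlgebra.IsSimple K (sl K V) :=
  have := LieAlgebra.SpecialLinear.isSimple (K := K) (n := Fin (finrank K V))
    (by rw [Fintype.card_fin]; exact h)
  .of_lieEquiv (slEquivMatrix (Module.finBasis K V)).symm

theorem trace_eq_zero_of_mem_eigenspace_ad {x u : Module.End K V} {t : K} (ht : t ≠ 0)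
    (hu : u ∈ (ad K (Module.End K V) x).eigenspace t) : LinearMap.trace K V u = 0 := by
  rw [mem_eigenspace_iff, ad_apply, Ring.lie_def] at hu
  have := congrArg (LinearMap.trace K V) hu
  rw [map_sub, LinearMap.trace_mul_comm, sub_self, map_smul, smul_eq_mul] at this
  exact (mul_eq_zero.mp this.symm).resolve_left ht

theorem finrank_eigenspace_ad_sl (x : sl K V) {t : K} (ht : t ≠ 0) :
    finrank K ((ad K (sl K V) x).eigenspace t) =
      finrank K ((ad K (Module.End K V) x).eigenspace t) := by
  let ι : sl K V →ₗ[K] Module.End K V := (sl K V).incl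
  have hι : Function.Injective ι := Subtype.val_injective
  suffices h : ((ad K (sl K V) x).eigenspace t).map ι =
      (ad K (Module.End K V) x).eigenspace t by
    rw [← h, (Submodule.equivMapOfInjective ι hι _).finrank_eq]
  ext u
  constructor
  · rintro ⟨y, hy, rfl⟩
    rw [SetLike.mem_coe, mem_eigenspace_iff] at hy
    rw [mem_eigenspace_iff]
    exact congrArg Subtype.val hy
  · intro hu
    have htr := trace_eq_zero_of_mem_eigenspace_ad ht hu
    rw [mem_eigenspace_iff] at hu
    exact ⟨⟨u, htr⟩, by rw [SetLike.mem_coe, mem_eigenspace_iff]; exact Subtype.ext hu, rfl⟩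

theorem finrank_eigenspace_ad_eq_of_ker_eq_sl {L V' : Type*} [LieRing L] [LieAlgebra K L]
    [AddCommGroup V'] [Module K V'] {φ : L →ₗ⁅K⁆ sl K V} {ψ : L →ₗ⁅K⁆ sl K V'}
    (hφ : Function.Surjective φ) (hψ : Function.Surjective ψ) (hker : φ.ker = ψ.ker) (x : L)
    {t : K} (ht : t ≠ 0) :
    finrank K ((ad K (Module.End K V) (φ x)).eigenspace t) =
      finrank K ((ad K (Module.End K V') (ψ x)).eigenspace t) := by
  rw [← finrank_eigenspace_ad_sl _ ht, ← finrank_eigenspace_ad_sl _ ht,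
    LieAlgebra.finrank_eigenspace_ad_eq_of_ker_eq hφ hψ hker]

section

variable {f u : Module.End K V} {t : K}

theorem apply_mem_eigenspace_of_mem_eigenspace_ad (hu : u ∈ (ad K (Module.End K V) f).eigenspace t)
    {μ : K} {v : V} (hv : v ∈ f.eigenspace μ) : u v ∈ f.eigenspace (μ + t) := by
  rw [mem_eigenspace_iff, ad_apply, Ring.lie_def] at hu
  rw [mem_eigenspace_iff] at hv ⊢
  have := LinearMap.congr_fun hu v
  simp only [LinearMap.sub_apply, mul_apply, hv, map_smul, LinearMap.smul_apply] at this
  rw [add_smul, ← this]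
  abel

section

variable {α β : K} (hc : IsCompl (f.eigenspace α) (f.eigenspace β))
include hc

theorem mem_eigenspace_ad_of_isCompl (hα : ∀ v ∈ f.eigenspace α, u v ∈ f.eigenspace (α + t))
    (hβ : ∀ v ∈ f.eigenspace β, u v ∈ f.eigenspace (β + t)) :
    u ∈ (ad K (Module.End K V) f).eigenspace t := by
  have hvanish : ∀ μ, (∀ v ∈ f.eigenspace μ, u v ∈ f.eigenspace (μ + t)) →
      f.eigenspace μ ≤ LinearMap.ker (⁅f, u⁆ - t • u) := fun μ hμ v hv => by
    have huv := mem_eigenspace_iff.mp (hμ v hv)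
    rw [mem_eigenspace_iff] at hv
    simp [Ring.lie_def, huv, hv, add_smul]
  have hker := top_le_iff.mp (hc.sup_eq_top ▸ sup_le (hvanish α hα) (hvanish β hβ))
  rw [mem_eigenspace_iff, ad_apply, ← sub_eq_zero]
  exact LinearMap.ker_eq_top.mp hker

theorem eigenspace_eq_bot_of_isCompl {γ : K} (hα : γ ≠ α) (hβ : γ ≠ β) : f.eigenspace γ = ⊥ := by
  have := f.eigenspaces_iSupIndep.disjoint_biSup (x := γ) (y := {α, β}) (by simp [hα, hβ])
  rwa [iSup_pair, hc.sup_eq_top, disjoint_top] at this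

theorem eigenspace_ad_eq_bot (ht : t ≠ 0) (hαβ : t ≠ α - β) (hβα : t ≠ β - α) :
    (ad K (Module.End K V) f).eigenspace t = ⊥ := by
  refine (Submodule.eq_bot_iff _).mpr fun u hu => ?_
  have hzero : ∀ {μ : K}, μ + t ≠ α → μ + t ≠ β → ∀ v ∈ f.eigenspace μ, u v = 0 :=
    fun hα hβ v hv => by
      simpa [eigenspace_eq_bot_of_isCompl hc hα hβ] using
        apply_mem_eigenspace_of_mem_eigenspace_ad hu hv
  rw [← LinearMap.ofIsCompl_zero hc]
  refine (LinearMap.ofIsCompl_eq hc (fun v => ?_) fun v => ?_).symm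
  · exact (hzero (fun h => ht (by linear_combination h))
      (fun h => hβα (by linear_combination h)) v v.2).symm
  · exact (hzero (fun h => hαβ (by linear_combination h))
      (fun h => ht (by linear_combination h)) v v.2).symm

theorem finrank_eigenspace_ad_sub [CharZero K] [FiniteDimensional K V] (hαβ : α ≠ β) :
    finrank K ((ad K (Module.End K V) f).eigenspace (α - β)) =
      finrank K (f.eigenspace β) * finrank K (f.eigenspace α) := by
  let Φ : (f.eigenspace β →ₗ[K] f.eigenspace α) →ₗ[K] Module.End K V :=
    { toFun := fun g => LinearMap.ofIsCompl hc 0 ((f.eigenspace α).subtype ∘ₗ g)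
      map_add' := fun g g' => by rw [LinearMap.comp_add, ← LinearMap.ofIsCompl_add, add_zero]
      map_smul' := fun c g => by
        rw [LinearMap.comp_smul, ← LinearMap.ofIsCompl_smul, smul_zero]; rfl }
  have hΦ : ∀ g (w : f.eigenspace β), Φ g w = g w := fun g w => by
    simp [Φ, LinearMap.ofIsCompl_apply_right]
  have hinj : Function.Injective Φ := fun g g' h => by
    ext w
    simpa [hΦ] using LinearMap.congr_fun h w
  have hrange : LinearMap.range Φ = (ad K (Module.End K V) f).eigenspace (α - β) := by
    apply le_antisymm
    · rintro _ ⟨g, rfl⟩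
      refine mem_eigenspace_ad_of_isCompl hc (fun v hv => ?_) (fun v hv => ?_)
      · simp [Φ, LinearMap.ofIsCompl_apply_left hc ⟨v, hv⟩]
      · rw [add_sub_cancel, show v = (⟨v, hv⟩ : f.eigenspace β) from rfl, hΦ]
        exact (g _).2
    · intro u hu
      have hα : ∀ v ∈ f.eigenspace α, u v = 0 := fun v hv => by
        have := apply_mem_eigenspace_of_mem_eigenspace_ad hu hv
        rwa [eigenspace_eq_bot_of_isCompl hc ?_ ?_, Submodule.mem_bot] at this
        · exact fun h => hαβ (by linear_combination h)
        · intro h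
          have h2 : (2 : K) * (α - β) = 0 := by linear_combination h
          exact hαβ (sub_eq_zero.mp ((mul_eq_zero.mp h2).resolve_left two_ne_zero))
      refine ⟨(u ∘ₗ (f.eigenspace β).subtype).codRestrict _ fun w => ?_,
        LinearMap.ofIsCompl_eq hc (fun v => (hα v v.2).symm) fun w => rfl⟩
      simpa using apply_mem_eigenspace_of_mem_eigenspace_ad hu w.2
  rw [← hrange, LinearMap.finrank_range_of_inj hinj, Module.finrank_linearMap]

theorem finrank_eigenspace_ad_eq_mul_or_eq_zero [CharZero K] [FiniteDimensional K V]
    (hαβ : α ≠ β) (ht : t ≠ 0) :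
    finrank K ((ad K (Module.End K V) f).eigenspace t) =
        finrank K (f.eigenspace α) * finrank K (f.eigenspace β) ∨
      finrank K ((ad K (Module.End K V) f).eigenspace t) = 0 := by
  by_cases h₁ : t = α - β
  · exact .inl (by rw [h₁, finrank_eigenspace_ad_sub hc hαβ, mul_comm])
  by_cases h₂ : t = β - α
  · exact .inl (by rw [h₂, finrank_eigenspace_ad_sub hc.symm hαβ.symm])
  · exact .inr (by rw [eigenspace_ad_eq_bot hc ht h₁ h₂, finrank_bot])

end

theorem finrank_mul_eq_of_finrank_eigenspace_ad_eq [CharZero K] [FiniteDimensional K V]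
    {V' : Type*} [AddCommGroup V'] [Module K V'] [FiniteDimensional K V'] {f' : Module.End K V'}
    {α β α' β' : K} (hc : IsCompl (f.eigenspace α) (f.eigenspace β)) (hαβ : α ≠ β)
    (hc' : IsCompl (f'.eigenspace α') (f'.eigenspace β')) (hαβ' : α' ≠ β')
    (hpos : 0 < finrank K (f.eigenspace α) * finrank K (f.eigenspace β))
    (h : ∀ t ≠ 0, finrank K ((ad K (Module.End K V) f).eigenspace t) =
      finrank K ((ad K (Module.End K V') f').eigenspace t)) :
    finrank K (f.eigenspace α) * finrank K (f.eigenspace β) =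
      finrank K (f'.eigenspace α') * finrank K (f'.eigenspace β') := by
  have ht : α - β ≠ 0 := sub_ne_zero.mpr hαβ
  have key := h _ ht
  rw [finrank_eigenspace_ad_sub hc hαβ, mul_comm] at key
  rcases finrank_eigenspace_ad_eq_mul_or_eq_zero hc' hαβ' ht with h' | h' <;> rw [h'] at key
  · exact key
  · omega

end

end Module.End

theorem Nat.eq_or_add_eq_of_mul_sub_eq {n a b : ℕ} (ha : a ≤ n) (hb : b ≤ n)
    (h : a * (n - a) = b * (n - b)) : a = b ∨ a + b = n := by
  have : ((a : ℤ) - b) * (n - a - b) = 0 := by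
    zify [ha, hb] at h
    linear_combination h
  rcases Int.mul_eq_zero.mp this with h | h
  · exact .inl (by omega)
  · exact .inr (by omega)

def Pi.evalLieHom (R : Type*) [CommRing R] {ι : Type*} (L : ι → Type*) [∀ i, LieRing (L i)]
    [∀ i, LieAlgebra R (L i)] (i : ι) : (∀ i, L i) →ₗ⁅R⁆ L i :=
  { LinearMap.proj i with map_lie' := rfl }

def LieHom.codRestrict {R L L' : Type*} [CommRing R] [LieRing L] [LieAlgebra R L] [LieRing L']
    [LieAlgebra R L'] (K : LieSubalgebra R L') (f : L →ₗ⁅R⁆ L') (h : ∀ x, f x ∈ K) :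
    L →ₗ⁅R⁆ K :=
  { (f : L →ₗ[R] L').codRestrict K.toSubmodule h with
    map_lie' := fun {x y} => Subtype.ext (f.map_lie x y) }

theorem stmt15_general (C : Type*) [Field C] [CharZero C]
    (n d : ℕ) (hn : 2 ≤ n)
    (a : Fin d → ℕ) (hinj : Function.Injective a)
    (ha1 : ∀ i, 1 ≤ a i) (ha2 : ∀ i, a i < n)
    (hsum : ∀ i j, a i ≠ n - a j)
    (W : Fin d → Type*) [∀ i, AddCommGroup (W i)] [∀ i, Module C (W i)]
    [∀ i, FiniteDimensional C (W i)] (hdim : ∀ i, Module.finrank C (W i) = n)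
    (k : LieSubalgebra C (∀ i, Module.End C (W i)))
    (hsl : ∀ x ∈ k, ∀ i, LinearMap.trace C (W i) (x i) = 0)
    (hsurj : ∀ i, ∀ u : Module.End C (W i), LinearMap.trace C (W i) u = 0 →
      ∃ x ∈ k, x i = u)
    (f : ∀ i, Module.End C (W i)) (hfk : f ∈ k)
    (hf : ∀ i, ∃ α β : C, α ≠ β ∧
      IsCompl ((f i).eigenspace α) ((f i).eigenspace β) ∧
      Module.finrank C ((f i).eigenspace α) = a i ∧
      Module.finrank C ((f i).eigenspace β) = n - a i) :
    ∀ x : ∀ i, Module.End C (W i),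
      (∀ i, LinearMap.trace C (W i) (x i) = 0) → x ∈ k := by
  intro x hx
  have : ∀ i, LieAlgebra.IsSimple C (Module.End.sl C (W i)) := fun i =>
    Module.End.isSimple_sl (hdim i ▸ hn)
  let π i : k →ₗ⁅C⁆ Module.End.sl C (W i) :=
    ((Pi.evalLieHom C _ i).comp k.incl).codRestrict _ fun y => hsl y y.2 i
  have hπ : ∀ i, Function.Surjective (π i) := fun i ⟨u, hu⟩ => by
    obtain ⟨y, hy, rfl⟩ := hsurj i u hu
    exact ⟨⟨y, hy⟩, rfl⟩
  have hker : Pairwise fun i j => (π i).ker ≠ (π j).ker := by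
    intro i j hij hker
    obtain ⟨α, β, hαβ, hc, hα, hβ⟩ := hf i
    obtain ⟨α', β', hαβ', hc', hα', hβ'⟩ := hf j
    have hprod := Module.End.finrank_mul_eq_of_finrank_eigenspace_ad_eq hc hαβ hc' hαβ'
      (by rw [hα, hβ]; exact Nat.mul_pos (ha1 i) (Nat.sub_pos_of_lt (ha2 i)))
      fun t ht => Module.End.finrank_eigenspace_ad_eq_of_ker_eq_sl (hπ i) (hπ j) hker ⟨f, hfk⟩ ht
    rw [hα, hβ, hα', hβ'] at hprod
    rcases Nat.eq_or_add_eq_of_mul_sub_eq (ha2 i).le (ha2 j).le hprod with h | h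
    · exact hij (hinj h)
    · exact hsum i j (by omega)
  obtain ⟨y, hy⟩ := LieAlgebra.exists_forall_eq_of_ker_ne hπ hker fun i => ⟨x i, hx i⟩
  have : (y : ∀ i, Module.End C (W i)) = x := funext fun i => congrArg Subtype.val (hy i)
  exact this ▸ y.2

/-- `C` algebraically closed of characteristic 0, `n ≥ 2`,
`a₁, …, a_d` distinct integers in `[1, n-1]` with `a_i ≠ n - a_j` for all
`i, j`; `W₁, …, W_d` are `n`-dimensional `C`-vector spaces, and
`k ⊆ ⊕_i sl(W_i)` is a semisimple Lie subalgebra which projects onto each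
`sl(W_i)` and contains a semisimple element `f` acting on each `W_i` with
exactly two eigenvalues of multiplicities `a_i` and `n - a_i`.
Then `k = ⊕_i sl(W_i)`. -/
theorem stmt15 (C : Type*) [Field C] [IsAlgClosed C] [CharZero C]
    (n d : ℕ) (hn : 2 ≤ n) (hd : 0 < d)
    (a : Fin d → ℕ) (hinj : Function.Injective a)
    (ha1 : ∀ i, 1 ≤ a i) (ha2 : ∀ i, a i < n)
    (hsum : ∀ i j, a i ≠ n - a j)
    (W : Fin d → Type*) [∀ i, AddCommGroup (W i)] [∀ i, Module C (W i)]
    [∀ i, FiniteDimensional C (W i)] (hdim : ∀ i, Module.finrank C (W i) = n)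
    (k : LieSubalgebra C (∀ i, Module.End C (W i)))
    (hss : LieAlgebra.IsSemisimple C k)
    (hsl : ∀ x ∈ k, ∀ i, LinearMap.trace C (W i) (x i) = 0)
    (hsurj : ∀ i, ∀ u : Module.End C (W i), LinearMap.trace C (W i) u = 0 →
      ∃ x ∈ k, x i = u)
    (f : ∀ i, Module.End C (W i)) (hfk : f ∈ k)
    (hf : ∀ i, ∃ α β : C, α ≠ β ∧
      IsCompl ((f i).eigenspace α) ((f i).eigenspace β) ∧
      Module.finrank C ((f i).eigenspace α) = a i ∧
      Module.finrank C ((f i).eigenspace β) = n - a i) :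
    ∀ x : ∀ i, Module.End C (W i),
      (∀ i, LinearMap.trace C (W i) (x i) = 0) → x ∈ k :=
  stmt15_general C n d hn a hinj ha1 ha2 hsum W hdim k hsl hsurj f hfk hf
end
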